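/- arXiv:1211.3219 — 4 statements merged into one kernel-verified Lean document; each statement's English description precedes it below -/
import Mathlib

section
/- If κ = 1 or κ = −1, then the function C2 = (γ, B M), where B = tr(A^{-1}) E + (κ − 1) A^{-1}, is a first integral of the equations dM/dt = M × ω, dγ/dt = κ γ × ω. -/
open scoped BigOperators
noncomputable section

/-- ℝ³ as functions `Fin 3 → ℝ`. -/
abbrev R3 := Fin 3 → ℝ

/-- Phase space: pairs `(γ, M)`. -/
abbrev St := R3 × R3

/-- Standard scalar product in ℝ³. -/
def dot3 (x y : R3) : ℝ := ∑ i, x i * y i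

/-- Cross product in ℝ³. -/
def cross (x y : R3) : R3 :=
  ![x 1 * y 2 - x 2 * y 1, x 2 * y 0 - x 0 * y 2, x 0 * y 1 - x 1 * y 0]

/-- Levi-Civita symbol. -/
def eps (i j k : Fin 3) : ℝ :=
  ((((j : ℤ) - (i : ℤ)) * ((k : ℤ) - (i : ℤ)) * ((k : ℤ) - (j : ℤ))) / 2 : ℤ)

/-- Application of the diagonal matrix A = diag a. -/
def Aapp (a : R3) (v : R3) : R3 := fun i => a i * v i

/-- Angular velocity ω expressed through M. -/
def omg (a : R3) (d : ℝ) (x : St) : R3 := fun i =>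
  a i * x.2 i + d * dot3 x.1 (Aapp a x.2) / (1 - d * dot3 x.1 (Aapp a x.1)) * (a i * x.1 i)

/-- g(γ) = sqrt(1 - d (γ, Aγ)). -/
def gfun (a : R3) (d : ℝ) (γ : R3) : ℝ := Real.sqrt (1 - d * dot3 γ (Aapp a γ))

/-- Partial derivative in the γ (inl) or M (inr) direction. -/
def pd : (Fin 3 ⊕ Fin 3) → (St → ℝ) → St → ℝ
  | .inl i, F, x => fderiv ℝ F x (Pi.single i 1, 0)
  | .inr i, F, x => fderiv ℝ F x (0, Pi.single i 1)

/-- Bracket of two functions determined by a structure matrix π. -/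
def pb (π : St → (Fin 3 ⊕ Fin 3) → (Fin 3 ⊕ Fin 3) → ℝ) (F G : St → ℝ) (x : St) : ℝ :=
  ∑ u, ∑ v, π x u v * pd u F x * pd v G x

/-- Structure matrix of the bracket {·,·}_g. -/
def piG (a : R3) (d : ℝ) (x : St) : (Fin 3 ⊕ Fin 3) → (Fin 3 ⊕ Fin 3) → ℝ
  | .inl _, .inl _ => 0
  | .inl i, .inr j => ∑ k, eps i j k * gfun a d x.1 * x.1 k
  | .inr i, .inl j => ∑ k, eps i j k * gfun a d x.1 * x.1 k
  | .inr i, .inr j => ∑ k, eps i j k *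
      (gfun a d x.1 * x.2 k - d * dot3 x.2 (Aapp a x.1) * x.1 k / gfun a d x.1)

/-- Coordinate functions on the phase space. -/
def coordFn : (Fin 3 ⊕ Fin 3) → St → ℝ
  | .inl i => fun x => x.1 i
  | .inr i => fun x => x.2 i

/-!
Along the flow, `d/dt (γ, BM) = κ (γ × ω, BM) + (γ, B (M × ω)) = (ω, Bγ × M + κ BM × γ)`.
For `κ = 1` the matrix `B` is scalar and the bracket vanishes by antisymmetry. For `κ = -1`,
`B = tr(A⁻¹) - 2A⁻¹`, and the identity `(Px) × y + x × (Py) = tr P (x × y) - P (x × y)` for the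
diagonal `P = A⁻¹` turns the bracket into `2A⁻¹(γ × M)`; the rate is then `2 (A⁻¹ω, γ × M)`,
which vanishes because `A⁻¹ω = M + cγ` lies in the span of `γ` and `M`.
-/

open Matrix

section CrossProduct

variable {R : Type*} [CommRing R]

theorem mul_dotProduct_comm {n : Type*} [Fintype n] (p x y : n → R) :
    (p * x) ⬝ᵥ y = x ⬝ᵥ (p * y) := by
  simp only [dotProduct, Pi.mul_apply]
  exact Finset.sum_congr rfl fun i _ => by ring

theorem mul_cross_add_cross_mul (p x y : Fin 3 → R) :
    (p * x) ⨯₃ y + x ⨯₃ (p * y) = (∑ i, p i) • (x ⨯₃ y) - p * (x ⨯₃ y) := by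
  ext i
  fin_cases i <;> simp [cross_apply, Fin.sum_univ_three] <;> ring

theorem smul_cross_dotProduct_add_dotProduct_mul_cross (κ : R) (b γ M ω : Fin 3 → R) :
    (κ • (γ ⨯₃ ω)) ⬝ᵥ (b * M) + γ ⬝ᵥ (b * (M ⨯₃ ω)) =
      ω ⬝ᵥ ((b * γ) ⨯₃ M + κ • ((b * M) ⨯₃ γ)) := by
  have hM : (b * M) ⬝ᵥ (γ ⨯₃ ω) = ω ⬝ᵥ ((b * M) ⨯₃ γ) := by
    rw [triple_product_permutation, triple_product_permutation]
  have hγ : (b * γ) ⬝ᵥ (M ⨯₃ ω) = ω ⬝ᵥ ((b * γ) ⨯₃ M) := by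
    rw [triple_product_permutation, triple_product_permutation]
  rw [smul_dotProduct, dotProduct_comm, hM, ← mul_dotProduct_comm, hγ, dotProduct_add,
    dotProduct_smul, add_comm]

theorem smul_cross_dotProduct_add_dotProduct_mul_cross_eq_zero {κ c : R} (hκ : κ = 1 ∨ κ = -1)
    {p b γ M ω : Fin 3 → R}
    (hb : ∀ i, b i = ∑ m, p m + (κ - 1) * p i) (hω : p * ω = M + c • γ) :
    (κ • (γ ⨯₃ ω)) ⬝ᵥ (b * M) + γ ⬝ᵥ (b * (M ⨯₃ ω)) = 0 := by
  have hb_mul : ∀ x, b * x = (∑ m, p m) • x + (κ - 1) • (p * x) := fun x => by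
    ext i; simp only [Pi.mul_apply, hb, Pi.add_apply, Pi.smul_apply, smul_eq_mul]; ring
  rw [smul_cross_dotProduct_add_dotProduct_mul_cross]
  rcases hκ with rfl | rfl
  · simp only [hb_mul, sub_self, zero_smul, add_zero, one_smul, map_smul, LinearMap.smul_apply,
      ← smul_add, cross_anticomm', smul_zero, dotProduct_zero]
  · calc ω ⬝ᵥ ((b * γ) ⨯₃ M + (-1 : R) • ((b * M) ⨯₃ γ))
        = ω ⬝ᵥ ((b * γ) ⨯₃ M + γ ⨯₃ (b * M)) := by rw [neg_one_smul, cross_anticomm]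
      _ = ω ⬝ᵥ ((2 : R) • (p * (γ ⨯₃ M))) := by
        congr 1
        simp only [hb_mul, map_add, map_smul, LinearMap.add_apply, LinearMap.smul_apply]
        linear_combination (norm := module) (-2 : R) • mul_cross_add_cross_mul p γ M
      _ = (2 : R) * ((M + c • γ) ⬝ᵥ (γ ⨯₃ M)) := by
        rw [dotProduct_smul, ← mul_dotProduct_comm, hω, smul_eq_mul]
      _ = 0 := by simp [add_dotProduct, smul_dotProduct, dot_self_cross, dot_cross_self]

end CrossProduct

theorem HasDerivAt.dotProduct {n : Type*} [Fintype n] {x y : ℝ → n → ℝ} {x' y' : n → ℝ}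
    {t : ℝ} (hx : HasDerivAt x x' t) (hy : HasDerivAt y y' t) :
    HasDerivAt (fun s => x s ⬝ᵥ y s) (x' ⬝ᵥ y t + x t ⬝ᵥ y') t := by
  rw [hasDerivAt_pi] at hx hy
  exact (HasDerivAt.fun_sum (u := Finset.univ) fun i _ => (hx i).fun_mul (hy i)).congr_deriv
    Finset.sum_add_distrib

theorem inv_mul_omg {a : R3} (ha : ∀ i, a i ≠ 0) (d : ℝ) (x : St) :
    a⁻¹ * omg a d x =
      x.2 + (d * dot3 x.1 (Aapp a x.2) / (1 - d * dot3 x.1 (Aapp a x.1))) • x.1 := by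
  ext i
  simp only [omg, Pi.mul_apply, Pi.inv_apply, Pi.add_apply, Pi.smul_apply, smul_eq_mul]
  field_simp [ha i]

theorem first_integral_C2_general
    (a : R3) (d κ : ℝ) (ha : ∀ i, a i ≠ 0)
    (hκ : κ = 1 ∨ κ = -1)
    (B : Fin 3 → ℝ) (hB : ∀ i, B i = (∑ m, (a m)⁻¹) + (κ - 1) * (a i)⁻¹)
    (γ M : ℝ → R3)
    (hM : ∀ t i, HasDerivAt (fun s => M s i) (cross (M t) (omg a d (γ t, M t)) i) t)
    (hγ : ∀ t i, HasDerivAt (fun s => γ s i) (κ * cross (γ t) (omg a d (γ t, M t)) i) t) :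
    ∀ t s : ℝ,
      dot3 (γ t) (fun i => B i * M t i) = dot3 (γ s) (fun i => B i * M s i) := by
  have hC2 : ∀ t, HasDerivAt (fun s => γ s ⬝ᵥ (B * M s)) 0 t := fun t => by
    have hγ' : HasDerivAt γ (κ • cross (γ t) (omg a d (γ t, M t))) t := hasDerivAt_pi.2 (hγ t)
    have hBM : HasDerivAt (fun s => B * M s) (B * cross (M t) (omg a d (γ t, M t))) t :=
      hasDerivAt_pi.2 fun i => (hM t i).const_mul (B i)
    convert hγ'.dotProduct hBM using 1
    exact (smul_cross_dotProduct_add_dotProduct_mul_cross_eq_zero hκ hB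
      (inv_mul_omg ha d (γ t, M t))).symm
  exact is_const_of_deriv_eq_zero (fun t => (hC2 t).differentiableAt) fun t => (hC2 t).deriv

/-- for κ = ±1, C2 = (γ, B M) with B = tr(A⁻¹)E + (κ-1)A⁻¹ is a first
integral of dM/dt = M × ω, dγ/dt = κ γ × ω. -/
theorem first_integral_C2
    (a : R3) (d κ : ℝ) (hd : 0 < d) (ha : ∀ i, a i ≠ 0)
    (hκ : κ = 1 ∨ κ = -1)
    (B : Fin 3 → ℝ) (hB : ∀ i, B i = (∑ m, (a m)⁻¹) + (κ - 1) * (a i)⁻¹)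
    (γ M : ℝ → R3)
    (hdom : ∀ t, 1 - d * dot3 (γ t) (Aapp a (γ t)) ≠ 0)
    (hM : ∀ t i, HasDerivAt (fun s => M s i) (cross (M t) (omg a d (γ t, M t)) i) t)
    (hγ : ∀ t i, HasDerivAt (fun s => γ s i) (κ * cross (γ t) (omg a d (γ t, M t)) i) t) :
    ∀ t s : ℝ,
      dot3 (γ t) (fun i => B i * M t i) = dot3 (γ s) (fun i => B i * M s i) :=
  first_integral_C2_general a d κ ha hκ B hB γ M hM hγ
end
end

section
/- The density g(γ)^{-1} with g(γ) = sqrt(1 − d (γ, A γ)) defines an invariant measure for the vector field of the reduced equations dM/dt = M × ω, dγ/dt = κ γ × ω; that is, the divergence of g^{-1} times the vector field vanishes. -/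
open scoped BigOperators
noncomputable section

/-!
Write `ρ = g⁻¹`, `X = (κ γ × ω, M × ω)` and `ω = AM + f Aγ`, so that
`div (ρ X) = ρ div X + dρ (X)`. Since `∂ω/∂M = A + d/(1 - d(γ,Aγ)) Aγ ⊗ Aγ` is symmetric, the
`M`-divergence of `M × ω` vanishes. Likewise `∂ω/∂γ = f A + Aγ ⊗ ∇_γ f` with
`∇_γ f ≡ d AM/(1 - d(γ,Aγ))` modulo `Aγ`, so the `γ`-divergence of `κ γ × ω` is
`κ d ρ² (AM, γ × Aγ)`. On the other hand `dρ = d ρ³ (Aγ, ·)` and `(Aγ, γ × ω) = (Aγ, γ × AM)`,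
so `dρ (X) = κ d ρ³ (Aγ, γ × AM)`, and the two triple products cancel.
-/

open Matrix

section Leibniz

variable {E F G H : Type*} [NormedAddCommGroup E] [NormedSpace ℝ E] [FiniteDimensional ℝ E]
  [NormedAddCommGroup F] [NormedSpace ℝ F] [FiniteDimensional ℝ F]
  [NormedAddCommGroup G] [NormedSpace ℝ G] [NormedAddCommGroup H] [NormedSpace ℝ H]
  (B : E →ₗ[ℝ] F →ₗ[ℝ] G) {f : H → E} {g : H → F} {x : H}

theorem DifferentiableAt.linearMap_apply₂ (hf : DifferentiableAt ℝ f x)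
    (hg : DifferentiableAt ℝ g x) : DifferentiableAt ℝ (fun y => B (f y) (g y)) x :=
  (B.toContinuousBilinearMap.hasFDerivAt_of_bilinear hf.hasFDerivAt hg.hasFDerivAt).differentiableAt

theorem fderiv_linearMap_apply₂ (hf : DifferentiableAt ℝ f x) (hg : DifferentiableAt ℝ g x)
    (h : H) : fderiv ℝ (fun y => B (f y) (g y)) x h =
      B (fderiv ℝ f x h) (g x) + B (f x) (fderiv ℝ g x h) := by
  change fderiv ℝ (fun y => B.toContinuousBilinearMap (f y) (g y)) x h = _
  rw [(B.toContinuousBilinearMap.hasFDerivAt_of_bilinear hf.hasFDerivAt hg.hasFDerivAt).fderiv]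
  simp [add_comm]

end Leibniz

section ScalarCalculus

variable {E : Type*} [NormedAddCommGroup E] [NormedSpace ℝ E] {F G : E → ℝ} {x : E}

lemma fderiv_fun_inv_apply (hF : DifferentiableAt ℝ F x) (h0 : F x ≠ 0) (h : E) :
    fderiv ℝ (fun y => (F y)⁻¹) x h = -fderiv ℝ F x h / F x ^ 2 := by
  have hinv := (hasDerivAt_inv h0).comp_hasFDerivAt x hF.hasFDerivAt
  rw [Function.comp_def] at hinv
  rw [hinv.fderiv]
  simp [div_eq_inv_mul]

lemma fderiv_fun_div_apply (hF : DifferentiableAt ℝ F x) (hG : DifferentiableAt ℝ G x)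
    (h0 : G x ≠ 0) (h : E) : fderiv ℝ (fun y => F y / G y) x h =
      (fderiv ℝ F x h * G x - F x * fderiv ℝ G x h) / G x ^ 2 := by
  simp only [div_eq_mul_inv]
  rw [fderiv_fun_mul (d := fun y => (G y)⁻¹) hF (hG.inv h0)]
  simp only [_root_.add_apply, _root_.smul_apply, fderiv_fun_inv_apply hG h0, smul_eq_mul]
  field_simp
  ring

end ScalarCalculus

def unitVec : Fin 3 ⊕ Fin 3 → St
  | .inl i => (Pi.single i 1, 0)
  | .inr i => (0, Pi.single i 1)

def coordCLM : (Fin 3 ⊕ Fin 3) → St →L[ℝ] ℝ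
  | .inl i => (ContinuousLinearMap.proj i).comp (ContinuousLinearMap.fst ℝ R3 R3)
  | .inr i => (ContinuousLinearMap.proj i).comp (ContinuousLinearMap.snd ℝ R3 R3)

lemma coordCLM_apply (u : Fin 3 ⊕ Fin 3) (v : St) : coordCLM u v = coordFn u v := by
  cases u <;> rfl

lemma sum_coordFn_smul_unitVec (v : St) : ∑ u, coordFn u v • unitVec u = v := by
  simp only [Fintype.sum_sum_type, coordFn, unitVec]
  ext i <;> simp [Prod.fst_sum, Prod.snd_sum, Finset.sum_apply, Pi.single_apply]

def divergence (V : St → St) (x : St) : ℝ := ∑ u, coordFn u (fderiv ℝ V x (unitVec u))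

section Divergence

variable {V : St → St} {x : St}

lemma pd_coordFn_comp (hV : DifferentiableAt ℝ V x) (u v : Fin 3 ⊕ Fin 3) :
    pd u (fun y => coordFn v (V y)) x = coordFn v (fderiv ℝ V x (unitVec u)) := by
  have hcomp := (coordCLM v).hasFDerivAt.comp x hV.hasFDerivAt
  simp only [coordCLM_apply, Function.comp_def] at hcomp
  rw [← coordCLM_apply, ← ContinuousLinearMap.comp_apply, ← hcomp.fderiv]
  cases u <;> rfl

lemma divergence_eq_sum_pd (hV : DifferentiableAt ℝ V x) :
    divergence V x = ∑ u, pd u (fun y => coordFn u (V y)) x := by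
  simp only [divergence, pd_coordFn_comp hV]

lemma divergence_smul {ρ : St → ℝ} (hρ : DifferentiableAt ℝ ρ x)
    (hV : DifferentiableAt ℝ V x) :
    divergence (fun y => ρ y • V y) x = ρ x * divergence V x + fderiv ℝ ρ x (V x) := by
  conv_rhs => rw [← sum_coordFn_smul_unitVec (V x)]
  simp only [divergence, fderiv_fun_smul hρ hV, map_sum, map_smul, smul_eq_mul, Finset.mul_sum,
    ← Finset.sum_add_distrib]
  refine Finset.sum_congr rfl fun u _ => ?_
  simp only [_root_.add_apply, _root_.smul_apply, ContinuousLinearMap.smulRight_apply,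
    ← coordCLM_apply, map_add, map_smul, smul_eq_mul, add_right_inj]
  exact mul_comm _ _

end Divergence

lemma cross_eq_crossProduct (v w : R3) : cross v w = v ⨯₃ w := (cross_apply v w).symm

lemma sum_single_cross_apply {R : Type*} [CommRing R] (w : Fin 3 → R) :
    ∑ i, (Pi.single i 1 ⨯₃ w) i = 0 := by
  simp [Fin.sum_univ_three, cross_apply]

lemma dotProduct_mul_comm {n R : Type*} [Fintype n] [CommSemiring R] (a v w : n → R) :
    v ⬝ᵥ (a * w) = w ⬝ᵥ (a * v) :=
  Finset.sum_congr rfl fun _ _ => by simp only [Pi.mul_apply]; ring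

section WeightedDot

variable (a : R3) {V W : St → R3} {x : St}

def weightedDot : R3 →ₗ[ℝ] R3 →ₗ[ℝ] ℝ :=
  (dotProductBilin ℝ ℝ).compl₂ (LinearMap.mulLeft ℝ a)

lemma DifferentiableAt.dotProduct_mul (hV : DifferentiableAt ℝ V x)
    (hW : DifferentiableAt ℝ W x) : DifferentiableAt ℝ (fun y => V y ⬝ᵥ (a * W y)) x :=
  DifferentiableAt.linearMap_apply₂ (weightedDot a) hV hW

lemma fderiv_dotProduct_mul_apply (hV : DifferentiableAt ℝ V x) (hW : DifferentiableAt ℝ W x)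
    (h : St) : fderiv ℝ (fun y => V y ⬝ᵥ (a * W y)) x h =
      fderiv ℝ V x h ⬝ᵥ (a * W x) + V x ⬝ᵥ (a * fderiv ℝ W x h) :=
  fderiv_linearMap_apply₂ (weightedDot a) hV hW h

end WeightedDot

section Omega

variable (a : R3) (d : ℝ)

def omgCoeff (y : St) : ℝ := d * (y.1 ⬝ᵥ (a * y.2)) / (1 - d * (y.1 ⬝ᵥ (a * y.1)))

lemma omg_eq (y : St) : omg a d y = a * y.2 + omgCoeff a d y • (a * y.1) := rfl

-- `ω - A M` is parallel to `A γ`, which is orthogonal to `γ × A γ`.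
lemma dotProduct_mul_cross_omg (x : St) :
    x.1 ⬝ᵥ (a * x.1 ⨯₃ omg a d x) = -((a * x.2) ⬝ᵥ x.1 ⨯₃ (a * x.1)) := by
  simp only [dotProduct, omg_eq, cross_apply, Nat.succ_eq_add_one, Nat.reduceAdd, Fin.isValue,
    Pi.add_apply, Pi.mul_apply, Pi.smul_apply, smul_eq_mul, Fin.sum_univ_three, cons_val_zero,
    cons_val_one, cons_val]
  ring

variable {a d} {x : St} (hx : 1 - d * (x.1 ⬝ᵥ (a * x.1)) ≠ 0)
include hx

lemma differentiableAt_omgCoeff : DifferentiableAt ℝ (omgCoeff a d) x := by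
  have hP := differentiableAt_fst.dotProduct_mul a differentiableAt_snd (x := x)
  have hQ := differentiableAt_fst.dotProduct_mul a differentiableAt_fst (x := x)
  unfold omgCoeff
  simp only [div_eq_mul_inv]
  exact (hP.const_mul d).mul (((hQ.const_mul d).const_sub 1).inv hx)

lemma fderiv_omgCoeff_apply (h : St) : fderiv ℝ (omgCoeff a d) x h =
    d * (h.1 ⬝ᵥ (a * x.2) + x.1 ⬝ᵥ (a * h.2)) / (1 - d * (x.1 ⬝ᵥ (a * x.1))) +
      2 * d ^ 2 * (x.1 ⬝ᵥ (a * x.2)) * (x.1 ⬝ᵥ (a * h.1)) /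
        (1 - d * (x.1 ⬝ᵥ (a * x.1))) ^ 2 := by
  have hP := differentiableAt_fst.dotProduct_mul a differentiableAt_snd (x := x)
  have hQ := differentiableAt_fst.dotProduct_mul a differentiableAt_fst (x := x)
  unfold omgCoeff
  rw [fderiv_fun_div_apply (hP.const_mul d) ((hQ.const_mul d).const_sub 1) hx]
  simp only [fderiv_const_sub, fderiv_const_mul hP, fderiv_const_mul hQ, _root_.smul_apply,
    _root_.neg_apply, smul_eq_mul,
    fderiv_dotProduct_mul_apply a differentiableAt_fst differentiableAt_snd,
    fderiv_dotProduct_mul_apply a differentiableAt_fst differentiableAt_fst, fderiv_fst,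
    fderiv_snd, ContinuousLinearMap.coe_fst', ContinuousLinearMap.coe_snd']
  rw [dotProduct_mul_comm a h.1 x.1]
  field_simp
  ring

lemma differentiableAt_omg : DifferentiableAt ℝ (omg a d) x := by
  have := differentiableAt_omgCoeff hx
  change DifferentiableAt ℝ (fun y => a * y.2 + omgCoeff a d y • (a * y.1)) x
  fun_prop

lemma fderiv_omg_apply (h : St) : fderiv ℝ (omg a d) x h =
    a * h.2 + fderiv ℝ (omgCoeff a d) x h • (a * x.1) + omgCoeff a d x • (a * h.1) := by
  have hf := differentiableAt_omgCoeff hx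
  have hM : DifferentiableAt ℝ (fun y : St => a * y.2) x := by fun_prop
  have hγ : DifferentiableAt ℝ (fun y : St => a * y.1) x := by fun_prop
  have hfγ : DifferentiableAt ℝ (fun y => omgCoeff a d y • (a * y.1)) x := by fun_prop
  change fderiv ℝ (fun y => a * y.2 + omgCoeff a d y • (a * y.1)) x h = _
  rw [fderiv_fun_add hM hfγ, fderiv_fun_smul hf hγ, fderiv_const_mul differentiableAt_snd,
    fderiv_const_mul differentiableAt_fst]
  simp only [fderiv_snd, fderiv_fst, _root_.add_apply, _root_.smul_apply, smul_eq_mul,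
    ContinuousLinearMap.coe_snd', ContinuousLinearMap.coe_fst', ContinuousLinearMap.smulRight_apply]
  abel

lemma sum_cross_fderiv_omg_fst :
    ∑ i, (x.1 ⨯₃ fderiv ℝ (omg a d) x (Pi.single i 1, 0)) i =
      d / (1 - d * (x.1 ⬝ᵥ (a * x.1))) * ((a * x.2) ⬝ᵥ x.1 ⨯₃ (a * x.1)) := by
  simp only [fderiv_omg_apply hx, fderiv_omgCoeff_apply hx, omgCoeff]
  generalize 1 - d * (x.1 ⬝ᵥ (a * x.1)) = q at hx ⊢
  simp only [mul_zero, dotProduct, Pi.single_apply, Pi.mul_apply, ite_mul, one_mul, zero_mul,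
    Finset.sum_ite_eq', Finset.mem_univ, ↓reduceIte, Pi.zero_apply, Finset.sum_const_zero,
    add_zero, Fin.sum_univ_three, Fin.isValue, mul_ite, mul_one, zero_add, cross_apply,
    Nat.succ_eq_add_one, Nat.reduceAdd, Pi.add_apply, Pi.smul_apply, smul_eq_mul, Fin.reduceEq,
    one_ne_zero, cons_val_zero, zero_ne_one, cons_val_one, cons_val]
  field_simp
  ring

lemma sum_cross_fderiv_omg_snd :
    ∑ i, (x.2 ⨯₃ fderiv ℝ (omg a d) x (0, Pi.single i 1)) i = 0 := by
  simp only [fderiv_omg_apply hx, fderiv_omgCoeff_apply hx, omgCoeff]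
  generalize 1 - d * (x.1 ⬝ᵥ (a * x.1)) = q at hx ⊢
  simp only [dotProduct, Pi.zero_apply, Pi.mul_apply, zero_mul, Finset.sum_const_zero,
    Pi.single_apply, mul_ite, mul_one, mul_zero, Finset.sum_ite_eq', Finset.mem_univ, ↓reduceIte,
    zero_add, Fin.sum_univ_three, Fin.isValue, zero_div, add_zero, smul_zero, cross_apply,
    Nat.succ_eq_add_one, Nat.reduceAdd, Pi.add_apply, Pi.smul_apply, smul_eq_mul, Fin.reduceEq,
    one_ne_zero, cons_val_zero, zero_ne_one, cons_val_one, cons_val]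
  field_simp
  ring

end Omega

lemma gfun_eq (a γ : R3) (d : ℝ) : gfun a d γ = √(1 - d * (γ ⬝ᵥ (a * γ))) := rfl

def density (a : R3) (d : ℝ) (y : St) : ℝ := (gfun a d y.1)⁻¹

section Density

variable {a : R3} {d : ℝ} {x : St} (hx : 0 < 1 - d * (x.1 ⬝ᵥ (a * x.1)))
include hx

lemma differentiableAt_density : DifferentiableAt ℝ (density a d) x := by
  have hQ := differentiableAt_fst.dotProduct_mul a differentiableAt_fst (x := x)
  exact (((hQ.const_mul d).const_sub 1).sqrt hx.ne').inv (Real.sqrt_pos.2 hx).ne'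

lemma fderiv_density_apply (h : St) :
    fderiv ℝ (density a d) x h = d * (x.1 ⬝ᵥ (a * h.1)) / gfun a d x.1 ^ 3 := by
  have hQ := differentiableAt_fst.dotProduct_mul a differentiableAt_fst (x := x)
  have hq := (hQ.const_mul d).const_sub 1
  have hs := (Real.sqrt_pos.2 hx).ne'
  unfold density
  simp only [gfun_eq]
  rw [fderiv_fun_inv_apply (hq.sqrt hx.ne') hs, fderiv_sqrt hq hx.ne']
  simp only [fderiv_const_sub, fderiv_const_mul hQ, _root_.smul_apply, _root_.neg_apply,
    smul_eq_mul, fderiv_dotProduct_mul_apply a differentiableAt_fst differentiableAt_fst,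
    fderiv_fst, ContinuousLinearMap.coe_fst']
  rw [dotProduct_mul_comm a h.1 x.1]
  field_simp
  ring

end Density

def reducedField (a : R3) (d κ : ℝ) (y : St) : St :=
  (κ • y.1 ⨯₃ omg a d y, y.2 ⨯₃ omg a d y)

section ReducedField

variable {a : R3} {d : ℝ} (κ : ℝ) {x : St} (hx : 1 - d * (x.1 ⬝ᵥ (a * x.1)) ≠ 0)
include hx

lemma differentiableAt_reducedField : DifferentiableAt ℝ (reducedField a d κ) x :=
  ((DifferentiableAt.linearMap_apply₂ crossProduct differentiableAt_fst
    (differentiableAt_omg hx)).const_smul κ).prodMk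
    (DifferentiableAt.linearMap_apply₂ crossProduct differentiableAt_snd (differentiableAt_omg hx))

lemma divergence_reducedField : divergence (reducedField a d κ) x =
    κ * (d / (1 - d * (x.1 ⬝ᵥ (a * x.1))) * ((a * x.2) ⬝ᵥ x.1 ⨯₃ (a * x.1))) := by
  have hω := differentiableAt_omg hx
  have hγ := DifferentiableAt.linearMap_apply₂ crossProduct differentiableAt_fst hω
  have hM := DifferentiableAt.linearMap_apply₂ crossProduct differentiableAt_snd hω
  unfold divergence reducedField
  rw [DifferentiableAt.fderiv_prodMk (hγ.fun_const_smul κ) hM, fderiv_fun_const_smul hγ]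
  simp only [coordFn, unitVec, Fintype.sum_sum_type, ContinuousLinearMap.prod_apply,
    _root_.smul_apply, Pi.smul_apply, smul_eq_mul, smul_add, Pi.add_apply,
    fderiv_linearMap_apply₂ crossProduct differentiableAt_fst hω,
    fderiv_linearMap_apply₂ crossProduct differentiableAt_snd hω, fderiv_fst, fderiv_snd,
    ContinuousLinearMap.coe_fst', ContinuousLinearMap.coe_snd', Finset.sum_add_distrib,
    ← Finset.mul_sum, sum_single_cross_apply, sum_cross_fderiv_omg_fst hx,
    sum_cross_fderiv_omg_snd hx]
  ring

end ReducedField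

theorem invariant_measure_general
    (a : R3) (d κ : ℝ)
    (x : St) (hx : 0 < 1 - d * dot3 x.1 (Aapp a x.1)) :
    (∑ i, pd (.inl i)
        (fun y => (gfun a d y.1)⁻¹ * (κ * cross y.1 (omg a d y) i)) x) +
    (∑ i, pd (.inr i)
        (fun y => (gfun a d y.1)⁻¹ * (cross y.2 (omg a d y) i)) x) = 0 := by
  have hρ := differentiableAt_density hx
  have hX := differentiableAt_reducedField κ hx.ne'
  trans divergence (fun y => density a d y • reducedField a d κ y) x
  · rw [divergence_eq_sum_pd (hρ.fun_smul hX), Fintype.sum_sum_type]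
    simp only [cross_eq_crossProduct]
    rfl
  rw [divergence_smul hρ hX, divergence_reducedField κ hx.ne', fderiv_density_apply hx]
  simp only [reducedField, mul_smul_comm, dotProduct_smul, dotProduct_mul_cross_omg, density]
  have hg : gfun a d x.1 ^ 2 = 1 - d * (x.1 ⬝ᵥ (a * x.1)) := Real.sq_sqrt hx.le
  have hg0 : gfun a d x.1 ≠ 0 := (Real.sqrt_pos.2 hx).ne'
  rw [← hg]
  field_simp
  ring

/-- the density g(γ)⁻¹ with g = sqrt(1 - d(γ,Aγ)) defines an invariant
measure: the divergence of g⁻¹ times the reduced vector field vanishes. -/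
theorem invariant_measure
    (a : R3) (d κ : ℝ) (hd : 0 < d) (ha : ∀ i, 0 < a i)
    (x : St) (hx : 0 < 1 - d * dot3 x.1 (Aapp a x.1)) :
    (∑ i, pd (.inl i)
        (fun y => (gfun a d y.1)⁻¹ * (κ * cross y.1 (omg a d y) i)) x) +
    (∑ i, pd (.inr i)
        (fun y => (gfun a d y.1)⁻¹ * (cross y.2 (omg a d y) i)) x) = 0 :=
  invariant_measure_general a d κ x hx
end
end

section
/- The integrals H1 = (M, ω) and H2 = (M, M) are in involution with respect to the Poisson bracket {·,·}_g: {H1, H2}_g = 0. -/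
open scoped BigOperators
noncomputable section

/-!
The partial gradients of `H1` are both multiples of `ω`: `∂H1/∂M = 2ω` and
`∂H1/∂γ = 2 d (γ, AM) / g² · ω`, where `g² = 1 - d (γ, Aγ)`. Since `H2 = (M, M)` has
`∂H2/∂γ = 0` and `∂H2/∂M = 2M`, and `ε_{ijk} M_j M_k = 0`, the bracket collapses to
`{F, H2}_g = 2 (g ∂F/∂γ - d (M, Aγ)/g · ∂F/∂M) · (M × γ)`, and for `F = H1` the vector in
parentheses vanishes identically.
-/

open ContinuousLinearMap

def dotAappL (b : R3) : R3 →L[ℝ] R3 →L[ℝ] ℝ :=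
  ∑ i, b i • (mul ℝ ℝ).bilinearComp (proj i) (proj i)

@[simp] lemma dotAappL_apply (b u v : R3) : dotAappL b u v = dot3 u (Aapp b v) := by
  simp [dotAappL, dot3, Aapp, sum_apply, mul_left_comm]

@[simp] lemma Aapp_one (v : R3) : Aapp 1 v = v := by
  ext i; simp [Aapp]

lemma dot3_Aapp_comm (b u v : R3) : dot3 u (Aapp b v) = dot3 v (Aapp b u) := by
  simp only [dot3, Aapp]; congr 1; ext i; ring

lemma dot3_omg (a : R3) (d : ℝ) (x : St) (v : R3) :
    dot3 v (omg a d x) = dot3 v (Aapp a x.2) +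
      d * dot3 x.1 (Aapp a x.2) / (1 - d * dot3 x.1 (Aapp a x.1)) * dot3 v (Aapp a x.1) := by
  simp only [dot3, omg, Aapp, Finset.mul_sum, ← Finset.sum_add_distrib]; congr 1; ext i; ring

lemma dot3_single (i : Fin 3) (v : R3) : dot3 (Pi.single i 1) v = v i := by
  simp [dot3, Pi.single_apply]

lemma dot3_zero_left (v : R3) : dot3 0 v = 0 := by
  simp [dot3]

lemma sum_eps_mul_mul_eq_cross (i : Fin 3) (u v : R3) :
    ∑ j, ∑ k, eps i j k * u j * v k = cross u v i := by
  fin_cases i <;> simp [Fin.sum_univ_three, eps, cross] <;> ring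

lemma sum_eps_mul_mul_self (i : Fin 3) (u : R3) : ∑ j, ∑ k, eps i j k * u j * u k = 0 := by
  rw [sum_eps_mul_mul_eq_cross]
  fin_cases i <;> simp [cross] <;> ring

lemma hasFDerivAt_dot3_Aapp (b : R3) (p q : St →L[ℝ] R3) (x : St) :
    HasFDerivAt (fun y => dot3 (p y) (Aapp b (q y)))
      ((dotAappL b).precompR St (p x) q + (dotAappL b).precompL St p (q x)) x := by
  simpa using (dotAappL b).hasFDerivAt_of_bilinear p.hasFDerivAt q.hasFDerivAt

def H1 (a : R3) (d : ℝ) (y : St) : ℝ :=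
  dot3 y.2 (Aapp a y.2) + d * (dot3 y.1 (Aapp a y.2))^2 / (1 - d * dot3 y.1 (Aapp a y.1))

def H2 (y : St) : ℝ := dot3 y.2 y.2

lemma fderiv_H1_apply (a : R3) (d : ℝ) (x h : St) (hD : 1 - d * dot3 x.1 (Aapp a x.1) ≠ 0) :
    fderiv ℝ (H1 a d) x h = 2 * (d * dot3 x.1 (Aapp a x.2) / (1 - d * dot3 x.1 (Aapp a x.1))
      * dot3 h.1 (omg a d x) + dot3 h.2 (omg a d x)) := by
  have hm := hasFDerivAt_dot3_Aapp a (snd ℝ R3 R3) (snd ℝ R3 R3) x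
  have hn := hasFDerivAt_dot3_Aapp a (fst ℝ R3 R3) (snd ℝ R3 R3) x
  have hD' := ((hasFDerivAt_dot3_Aapp a (fst ℝ R3 R3) (fst ℝ R3 R3) x).const_mul d).const_sub 1
  have hDinv := (hasDerivAt_inv hD).comp_hasFDerivAt x hD'
  have hH1 := (hm.add (((hn.pow 2).const_mul d).mul hDinv)).congr_of_eventuallyEq (f₁ := H1 a d)
    (.of_forall fun y => by simp [H1, div_eq_mul_inv])
  rw [hH1.fderiv]
  simp only [add_apply, smul_apply, comp_apply, precompR_apply, precompL_apply, compL_apply,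
    coe_fst', coe_snd', dotAappL_apply, Function.comp_apply, smul_eq_mul, nsmul_eq_mul,
    smul_add, smul_neg, neg_smul, neg_neg, neg_add_rev, Nat.add_one_sub_one, pow_one,
    Nat.cast_ofNat]
  rw [dot3_omg, dot3_omg, dot3_Aapp_comm a x.1 h.1, dot3_Aapp_comm a x.2 h.2,
    dot3_Aapp_comm a x.1 h.2]
  field_simp
  ring

lemma fderiv_H2_apply (x h : St) : fderiv ℝ H2 x h = 2 * dot3 h.2 x.2 := by
  have hH2 := (hasFDerivAt_dot3_Aapp 1 (snd ℝ R3 R3) (snd ℝ R3 R3) x).congr_of_eventuallyEq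
    (f₁ := H2) (.of_forall fun y => by simp [H2])
  rw [hH2.fderiv]
  simpa [two_mul] using dot3_Aapp_comm 1 x.2 h.2

lemma pb_piG_H2 (a : R3) (d : ℝ) (F : St → ℝ) (x : St) :
    pb (piG a d) F H2 x = 2 * ∑ i, (gfun a d x.1 * pd (.inl i) F x
      - d * dot3 x.2 (Aapp a x.1) / gfun a d x.1 * pd (.inr i) F x) * cross x.2 x.1 i := by
  simp only [pb, Fintype.sum_sum_type, piG, fderiv_H2_apply, pd, dot3_single, dot3_zero_left]
  rw [Finset.mul_sum, ← Finset.sum_add_distrib]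
  refine Finset.sum_congr rfl fun i _ => ?_
  have hcross := sum_eps_mul_mul_eq_cross i x.2 x.1
  have hself := sum_eps_mul_mul_self i x.2
  simp only [Fin.sum_univ_three] at hcross hself ⊢
  linear_combination (2 * gfun a d x.1 * fderiv ℝ F x (Pi.single i 1, 0)
    - 2 * d * dot3 x.2 (Aapp a x.1) / gfun a d x.1 * fderiv ℝ F x (0, Pi.single i 1)) * hcross
    + 2 * gfun a d x.1 * fderiv ℝ F x (0, Pi.single i 1) * hself

lemma gfun_mul_pd_inl_H1 (a : R3) (d : ℝ) (x : St) (hD : 0 < 1 - d * dot3 x.1 (Aapp a x.1))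
    (i : Fin 3) :
    gfun a d x.1 * pd (.inl i) (H1 a d) x =
      d * dot3 x.2 (Aapp a x.1) / gfun a d x.1 * pd (.inr i) (H1 a d) x := by
  have hg : gfun a d x.1 ^ 2 = 1 - d * dot3 x.1 (Aapp a x.1) := Real.sq_sqrt hD.le
  have hg0 : gfun a d x.1 ≠ 0 := (Real.sqrt_pos.2 hD).ne'
  simp only [pd, fderiv_H1_apply a d x _ hD.ne', dot3_single, dot3_zero_left]
  rw [dot3_Aapp_comm, ← hg]
  field_simp
  ring

theorem involution_H1_H2_g_bracket_general
    (a : R3) (d : ℝ)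
    (x : St) (hx : 0 < 1 - d * dot3 x.1 (Aapp a x.1)) :
    pb (piG a d)
      (fun y => dot3 y.2 (Aapp a y.2) +
        d * (dot3 y.1 (Aapp a y.2))^2 / (1 - d * dot3 y.1 (Aapp a y.1)))
      (fun y => dot3 y.2 y.2) x = 0 := by
  change pb (piG a d) (H1 a d) H2 x = 0
  simp [pb_piG_H2, gfun_mul_pd_inl_H1 a d x hx]

/-- H1 = (M,ω) and H2 = (M,M) are in involution with respect to {·,·}_g. -/
theorem involution_H1_H2_g_bracket
    (a : R3) (d : ℝ) (hd : 0 < d)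
    (x : St) (hx : 0 < 1 - d * dot3 x.1 (Aapp a x.1)) :
    pb (piG a d)
      (fun y => dot3 y.2 (Aapp a y.2) +
        d * (dot3 y.1 (Aapp a y.2))^2 / (1 - d * dot3 y.1 (Aapp a y.1)))
      (fun y => dot3 y.2 y.2) x = 0 :=
  involution_H1_H2_g_bracket_general a d x hx
end
end

section
/- The bivector P_b (κ = −1) is not compatible with the canonical Lie–Poisson bivector P on e*(3): the Schouten bracket [P, P_b] does not vanish; equivalently, there exist coordinate functions x, y, z for which the mixed Jacobi sum over cyclic permutations of ({x,{y,z}_b} + {x,{y,z}}) is nonzero (for generic distinct b_1, b_2, b_3). -/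
open scoped BigOperators
noncomputable section

/-- Entries of B = tr(A⁻¹)E - 2A⁻¹ (the case κ = -1): b_i = tr A⁻¹ - 2/a_i. -/
def bb (a : R3) (i : Fin 3) : ℝ := (∑ m, (a m)⁻¹) - 2 * (a i)⁻¹

/-- α_k = C₂ + b_k (γ, M) with C₂ = (γ, B M). -/
def alf (a : R3) (x : St) (k : Fin 3) : ℝ :=
  (∑ m, x.1 m * bb a m * x.2 m) + bb a k * dot3 x.1 x.2

/-- The table of brackets {M_i, γ_j}_b. -/
def pmg (a : R3) (d : ℝ) (γ : R3) : Fin 3 → Fin 3 → ℝ :=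
  let g := gfun a d γ
  let b := bb a
  ![![ g * (b 1 - b 2) * γ 0 * γ 1 * γ 2,
       g * γ 2 * (b 2 * (γ 0 ^ 2 + γ 2 ^ 2) + b 1 * γ 1 ^ 2 - b 1 * b 2 / (2 * d)),
       -(g * γ 1 * (b 1 * (γ 0 ^ 2 + γ 1 ^ 2) + b 2 * γ 2 ^ 2 - b 1 * b 2 / (2 * d))) ],
    ![ -(g * γ 2 * (b 0 * γ 0 ^ 2 + b 2 * (γ 1 ^ 2 + γ 2 ^ 2) - b 0 * b 2 / (2 * d))),
       g * (b 2 - b 0) * γ 0 * γ 1 * γ 2,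
       g * γ 0 * (b 0 * (γ 0 ^ 2 + γ 1 ^ 2) + b 2 * γ 2 ^ 2 - b 0 * b 2 / (2 * d)) ],
    ![ g * γ 1 * (b 0 * γ 0 ^ 2 + b 1 * (γ 1 ^ 2 + γ 2 ^ 2) - b 0 * b 1 / (2 * d)),
       -(g * γ 0 * (b 0 * (γ 0 ^ 2 + γ 2 ^ 2) + b 1 * γ 1 ^ 2 - b 0 * b 1 / (2 * d))),
       g * (b 0 - b 1) * γ 0 * γ 1 * γ 2 ]]

/-- The component f_k with {M_i, M_j}_b = Σ_k ε_ijk f_k. -/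
def fmm (a : R3) (d : ℝ) (x : St) (k : Fin 3) : ℝ :=
  let g := gfun a d x.1
  let b := bb a
  g * (-(alf a x k) * x.1 k + dot3 x.1 x.1 * b k * x.2 k - (b k) ^ 2 * x.2 k / (2 * d))
  - g⁻¹ * x.1 k * (2 * d * dot3 x.1 x.1 - (b 0 + b 1 + b 2)) *
    ( alf a x k * b k / (∏ m ∈ Finset.univ.filter (fun m => m ≠ k), (b k + b m))
      + (∏ m ∈ Finset.univ.filter (fun m => m ≠ k), (b k - b m)) * b k * x.1 k * x.2 k /
          ((b 0 + b 1) * (b 1 + b 2) * (b 0 + b 2)) )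

/-- Structure matrix of the κ = -1 bracket {·,·}_b. -/
def piB (a : R3) (d : ℝ) (x : St) : (Fin 3 ⊕ Fin 3) → (Fin 3 ⊕ Fin 3) → ℝ
  | .inl _, .inl _ => 0
  | .inl i, .inr j => -(pmg a d x.1 j i)
  | .inr i, .inl j => pmg a d x.1 i j
  | .inr i, .inr j => ∑ k, eps i j k * fmm a d x k

/-- Structure matrix of the canonical Lie-Poisson bracket on e*(3). -/
def piP (x : St) : (Fin 3 ⊕ Fin 3) → (Fin 3 ⊕ Fin 3) → ℝ
  | .inl _, .inl _ => 0
  | .inl i, .inr j => ∑ k, eps i j k * x.1 k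
  | .inr i, .inl j => ∑ k, eps i j k * x.1 k
  | .inr i, .inr j => ∑ k, eps i j k * x.2 k

/-! At `a = (1, 1/2, 1/4)`, `d = 3/4` one has `b = (5, 3, -1)`, and at `x₀ = (γ, M) = (e₀, 0)`
also `g = 1/2`. On coordinate functions the mixed Jacobi sum is the Schouten expression
`∑ₛ π_P(u,s) ∂ₛ π_b(v,w) + ∑ₛ π_b(u,s) ∂ₛ π_P(v,w)` (summed cyclically), and since `π_P` is linear
its partial derivatives are its values on unit vectors. For `(u, v, w) = (γ 1, M 0, M 1)` only four
terms survive at `x₀`: `∂_{M 2} f₂ = -5/6`, `∂_{γ 2} {γ 1, M 0}_b = -1/2`, `{γ 1, M 2}_b = -5/2`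
and `-{M 1, γ 2}_b = -25/6`, so the sum is `-8`. -/

def pdDir : (Fin 3 ⊕ Fin 3) → St
  | .inl i => (Pi.single i 1, 0)
  | .inr i => (0, Pi.single i 1)

lemma pd_eq_fderiv (s : Fin 3 ⊕ Fin 3) (F : St → ℝ) (x : St) :
    pd s F x = fderiv ℝ F x (pdDir s) := by
  cases s <;> rfl

lemma pd_eq_lineDeriv {F : St → ℝ} {x : St} (hF : DifferentiableAt ℝ F x) (s : Fin 3 ⊕ Fin 3) :
    pd s F x = lineDeriv ℝ F x (pdDir s) := by
  rw [pd_eq_fderiv, hF.lineDeriv_eq_fderiv]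

lemma pd_continuousLinearMap (L : St →L[ℝ] ℝ) (s : Fin 3 ⊕ Fin 3) (x : St) :
    pd s L x = L (pdDir s) := by
  rw [pd_eq_fderiv, L.fderiv]

lemma pd_mul {F G : St → ℝ} {x : St} (hF : DifferentiableAt ℝ F x)
    (hG : DifferentiableAt ℝ G x) (s : Fin 3 ⊕ Fin 3) :
    pd s (fun y => F y * G y) x = pd s F x * G x + F x * pd s G x := by
  rw [pd_eq_fderiv, pd_eq_fderiv, pd_eq_fderiv, fderiv_fun_mul hF hG]
  simp only [add_apply, smul_apply, smul_eq_mul]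
  ring

def coordFnCLM : (Fin 3 ⊕ Fin 3) → St →L[ℝ] ℝ
  | .inl i => (ContinuousLinearMap.proj i).comp (ContinuousLinearMap.fst ℝ R3 R3)
  | .inr i => (ContinuousLinearMap.proj i).comp (ContinuousLinearMap.snd ℝ R3 R3)

lemma coe_coordFnCLM (p : Fin 3 ⊕ Fin 3) : ⇑(coordFnCLM p) = coordFn p := by
  cases p <;> rfl

lemma pd_coordFn (s p : Fin 3 ⊕ Fin 3) (x : St) :
    pd s (coordFn p) x = if s = p then 1 else 0 := by
  rw [← coe_coordFnCLM, pd_continuousLinearMap]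
  cases s <;> cases p <;> simp [coordFnCLM, pdDir, Pi.single_apply, eq_comm]

def piPLinearMap (p q : Fin 3 ⊕ Fin 3) : St →ₗ[ℝ] ℝ where
  toFun y := piP y p q
  map_add' y z := by
    cases p <;> cases q <;> simp [piP, mul_add, Finset.sum_add_distrib]
  map_smul' c y := by
    cases p <;> cases q <;> simp [piP, Finset.mul_sum, mul_left_comm]

lemma pd_piP (s p q : Fin 3 ⊕ Fin 3) (x : St) :
    pd s (fun y => piP y p q) x = piP (pdDir s) p q :=
  pd_continuousLinearMap (LinearMap.toContinuousLinearMap (piPLinearMap p q)) s x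

lemma pb_coordFn_left (π : St → (Fin 3 ⊕ Fin 3) → (Fin 3 ⊕ Fin 3) → ℝ)
    (p : Fin 3 ⊕ Fin 3) (G : St → ℝ) (x : St) :
    pb π (coordFn p) G x = ∑ s, π x p s * pd s G x := by
  simp only [pb, pd_coordFn, mul_ite, mul_one, mul_zero, ite_mul, zero_mul]
  rw [Finset.sum_comm]
  simp

lemma pb_coordFn (π : St → (Fin 3 ⊕ Fin 3) → (Fin 3 ⊕ Fin 3) → ℝ) (p q : Fin 3 ⊕ Fin 3) :
    pb π (coordFn p) (coordFn q) = fun x => π x p q := by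
  funext x
  simp [pb_coordFn_left, pd_coordFn]

lemma pb_coordFn_pb_coordFn (π π' : St → (Fin 3 ⊕ Fin 3) → (Fin 3 ⊕ Fin 3) → ℝ)
    (u v w : Fin 3 ⊕ Fin 3) (x : St) :
    pb π (coordFn u) (pb π' (coordFn v) (coordFn w)) x =
      ∑ s, π x u s * pd s (fun y => π' y v w) x := by
  rw [pb_coordFn_left, pb_coordFn]

lemma differentiableAt_gfun {a : R3} {d : ℝ} {x : St}
    (hx : 0 < 1 - d * dot3 x.1 (Aapp a x.1)) :
    DifferentiableAt ℝ (fun y : St => gfun a d y.1) x := by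
  unfold gfun dot3 Aapp at *
  exact (by fun_prop : DifferentiableAt ℝ (fun y : St => 1 - d * ∑ i, y.1 i * (a i * y.1 i)) x).sqrt
    hx.ne'

lemma differentiableAt_fmm {a : R3} {d : ℝ} {x : St}
    (hx : 0 < 1 - d * dot3 x.1 (Aapp a x.1)) (k : Fin 3) :
    DifferentiableAt ℝ (fun y => fmm a d y k) x := by
  have hg := differentiableAt_gfun hx
  have hg₀ : gfun a d x.1 ≠ 0 := (Real.sqrt_pos.2 hx).ne'
  unfold fmm alf dot3
  fun_prop (disch := exact hg₀)

def a₀ : R3 := ![1, 1/2, 1/4]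
def d₀ : ℝ := 3/4
def x₀ : St := (![1, 0, 0], 0)

lemma bb_a₀ : bb a₀ = ![5, 3, -1] := by
  funext i
  fin_cases i <;> norm_num [bb, a₀, Fin.sum_univ_three, Matrix.cons_val_two]

lemma one_sub_d₀_dot3 : 1 - d₀ * dot3 x₀.1 (Aapp a₀ x₀.1) = 1/4 := by
  norm_num [d₀, dot3, Aapp, a₀, x₀, Fin.sum_univ_three, Matrix.cons_val_two]

lemma gfun_x₀ : gfun a₀ d₀ x₀.1 = 1/2 := by
  rw [gfun, one_sub_d₀_dot3, show (1/4 : ℝ) = (1/2) ^ 2 by norm_num, Real.sqrt_sq (by norm_num)]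

lemma one_sub_d₀_dot3_pos : 0 < 1 - d₀ * dot3 x₀.1 (Aapp a₀ x₀.1) := by
  rw [one_sub_d₀_dot3]; norm_num

lemma pmg_a₀_x₀ : pmg a₀ d₀ x₀.1 = ![![0, 0, 0], ![0, 0, 25/6], ![0, 5/2, 0]] := by
  funext i j
  simp only [pmg, gfun_x₀, bb_a₀]
  fin_cases i <;> fin_cases j <;> norm_num [x₀, d₀, Matrix.cons_val_two]

lemma pd_piB_inr_zero_inr_one : pd (.inr 2) (fun y => piB a₀ d₀ y (.inr 0) (.inr 1)) x₀ = -5/6 := by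
  have hf : (fun y => piB a₀ d₀ y (.inr 0) (.inr 1)) = fun y => fmm a₀ d₀ y 2 := by
    funext y
    simp [piB, eps, Fin.sum_univ_three]
  -- On this line `γ = e₀` stays fixed, so `g = 1/2` and every term with a factor `γ 2` vanishes.
  have hline : (fun t : ℝ => fmm a₀ d₀ (x₀ + t • pdDir (.inr 2)) 2) = fun t => -5/6 * t := by
    funext t
    have hγ : (x₀ + t • pdDir (.inr 2)).1 = x₀.1 := by simp [pdDir]
    have hM : (x₀ + t • pdDir (.inr 2)).2 = t • Pi.single 2 1 := by simp [pdDir, x₀]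
    simp only [fmm, alf, hγ, hM, gfun_x₀]
    simp only [x₀, bb_a₀, d₀, dot3, Fin.sum_univ_three, Pi.smul_apply, Pi.single_apply,
      Matrix.cons_val_zero, Matrix.cons_val_one, Matrix.cons_val, Fin.reduceEq, if_true, if_false]
    ring
  rw [hf, pd_eq_lineDeriv (differentiableAt_fmm one_sub_d₀_dot3_pos 2), lineDeriv, hline]
  simp

lemma pd_piB_inl_one_inr_zero : pd (.inl 2) (fun y => piB a₀ d₀ y (.inl 1) (.inr 0)) x₀ = -1/2 := by
  have hf : (fun y => piB a₀ d₀ y (.inl 1) (.inr 0)) =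
      fun y => gfun a₀ d₀ y.1 * (y.1 2 * (y.1 0 ^ 2 + y.1 2 ^ 2 - 3 * y.1 1 ^ 2 - 2)) := by
    funext y
    simp only [piB, pmg, bb_a₀, d₀, Matrix.cons_val_zero, Matrix.cons_val_one, Matrix.cons_val]
    ring
  have hg := differentiableAt_gfun one_sub_d₀_dot3_pos
  rw [hf, pd_mul hg (by fun_prop), pd_mul (by fun_prop) (by fun_prop)]
  have hcoord : pd (.inl 2) (fun y : St => y.1 2) x₀ = 1 :=
    (pd_coordFn (.inl 2) (.inl 2) x₀).trans (if_pos rfl)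
  rw [hcoord, gfun_x₀]
  norm_num [x₀, Matrix.cons_val_two]

/-- the bivector P_b (κ = -1) is not compatible with the canonical
Lie-Poisson bivector P on e*(3): [P, P_b] ≠ 0, i.e. there exist parameters with
pairwise distinct b_i, a point, and coordinate functions for which the mixed
Jacobi sum fails to vanish. -/
theorem incompatibility_P_Pb :
    ∃ (a : R3) (d : ℝ) (x : St) (u v w : Fin 3 ⊕ Fin 3),
      0 < d ∧ (∀ i, 0 < a i) ∧
      (∀ i j : Fin 3, i ≠ j → bb a i ≠ bb a j) ∧
      (∀ i j : Fin 3, bb a i + bb a j ≠ 0) ∧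
      0 < 1 - d * dot3 x.1 (Aapp a x.1) ∧
      (pb piP (coordFn u) (pb (piB a d) (coordFn v) (coordFn w)) x +
       pb piP (coordFn v) (pb (piB a d) (coordFn w) (coordFn u)) x +
       pb piP (coordFn w) (pb (piB a d) (coordFn u) (coordFn v)) x) +
      (pb (piB a d) (coordFn u) (pb piP (coordFn v) (coordFn w)) x +
       pb (piB a d) (coordFn v) (pb piP (coordFn w) (coordFn u)) x +
       pb (piB a d) (coordFn w) (pb piP (coordFn u) (coordFn v)) x) ≠ 0 := by
  refine ⟨a₀, d₀, x₀, .inl 1, .inr 0, .inr 1, by norm_num [d₀], ?_, ?_, ?_,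
    one_sub_d₀_dot3_pos, ?_⟩
  · intro i
    fin_cases i <;> norm_num [a₀]
  · intro i j hij
    fin_cases i <;> fin_cases j <;> simp_all [bb_a₀] <;> norm_num
  · intro i j
    fin_cases i <;> fin_cases j <;> norm_num [bb_a₀]
  · simp only [pb_coordFn_pb_coordFn, pd_piP, Fintype.sum_sum_type, Fin.sum_univ_three]
    rw [pd_piB_inr_zero_inr_one, pd_piB_inl_one_inr_zero]
    simp only [piP, piB, pmg_a₀_x₀]
    norm_num [pdDir, eps, x₀, Fin.sum_univ_three, Matrix.cons_val_two]
end
end
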